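/- arXiv:2007.13378 — 2 statements merged into one kernel-verified Lean document; each statement's English description precedes it below -/
import Mathlib

section
/- Let U₁(n) = ∑ 2^{k(m)} over all maps m: ℤ_{≥1} → ℤ_{≥0} with ∑_j j·m(j) = n, where k(m) = |{ j even : m(j) ≠ 0 }|. Then the generating function satisfies ∑_{n≥0} U₁(n) t^n = (∏_{k≥1} 1/(1-t^k)) · ∏_{k≥1} (1+t^{2k}). -/
open PowerSeries Finset

/-- The geometric series `1/(1-t^k)` as a formal power series over `ℤ`. -/
noncomputable def geom (k : ℕ) : PowerSeries ℤ :=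
  PowerSeries.invOfUnit (1 - PowerSeries.X ^ k) 1

/-- The number of distinct even parts of a partition, i.e. `k(m) = |{j even : m(j) ≠ 0}|`
for the multiplicity function `m` of the partition. -/
def evenPartsCount {n : ℕ} (l : Nat.Partition n) : ℕ :=
  (l.parts.toFinset.filter fun i => Even i).card

/-- `U₁ n = ∑ 2^{k(m)}` over all multiplicity functions `m : ℤ_{≥1} → ℤ_{≥0}` with
`∑_j j·m(j) = n` (i.e. over all partitions of `n`), where `k(m)` is the number of even
`j` with `m(j) ≠ 0`. -/
def U1 (n : ℕ) : ℕ := ∑ l : Nat.Partition n, 2 ^ evenPartsCount l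

/-!
Weight a part size `i` by `2` if `i` is even and by `1` otherwise; then `U₁(n)` is the `n`-th
coefficient of Mathlib's partition generating function `Nat.Partition.genFun`, whose Euler factor
at `i` is `1 + 2 ∑_{j ≥ 1} t^{ij} = (1 + t^i)/(1 - t^i)` for even `i` and `1/(1 - t^i)` for odd `i`.
Reindexing the even factors by `i = 2k` gives the product formula, and truncating at `n` is harmless
because every factor of index `k > n` is `≡ 1 mod t^{n+1}`.
-/
open scoped PowerSeries.WithPiTopology

section

variable {R : Type*} [CommRing R]

theorem dvd_mul_sub_one {d a b : R} (ha : d ∣ a - 1) (hb : d ∣ b - 1) : d ∣ a * b - 1 := by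
  have : a * b - 1 = a * (b - 1) + (a - 1) := by ring
  rw [this]
  exact dvd_add (dvd_mul_of_dvd_right hb a) ha

theorem dvd_prod_sub_one {ι : Type*} {d : R} {f : ι → R} {s : Finset ι}
    (h : ∀ i ∈ s, d ∣ f i - 1) : d ∣ ∏ i ∈ s, f i - 1 :=
  prod_induction f (fun a => d ∣ a - 1) (fun _ _ => dvd_mul_sub_one) (by simp) h

end

namespace PowerSeries

variable {R : Type*} [CommRing R] [TopologicalSpace R]

theorem multipliable_of_X_pow_dvd_sub_one {F : ℕ → R⟦X⟧} (hF : ∀ i, X ^ i ∣ F i - 1) :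
    Multipliable F := by
  have hord : Filter.Tendsto (fun i => (F i - 1).order) Filter.atTop (nhds ⊤) :=
    ENat.tendsto_nhds_top_iff_natCast_lt.mpr fun n => Filter.eventually_atTop.mpr
      ⟨n + 1, fun i hi => lt_of_lt_of_le (by exact_mod_cast hi)
        (nat_le_order _ i (X_pow_dvd_iff.mp (hF i)))⟩
  simpa using WithPiTopology.multipliable_one_add_of_tendsto_order_atTop_nhds_top R hord

theorem HasProd.coeff_eq_coeff_prod_range [T2Space R] {F : ℕ → R⟦X⟧} {G : R⟦X⟧}
    (hG : HasProd F G) (hF : ∀ i, X ^ i ∣ F i - 1) (n : ℕ) :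
    coeff n G = coeff n (∏ i ∈ range (n + 1), F i) := by
  have hstable : ∀ s, range (n + 1) ⊆ s →
      coeff n (∏ i ∈ s, F i) = coeff n (∏ i ∈ range (n + 1), F i) := by
    intro s hs
    obtain ⟨q, hq⟩ : X ^ (n + 1) ∣ ∏ i ∈ s \ range (n + 1), F i - 1 :=
      dvd_prod_sub_one fun i hi =>
        (pow_dvd_pow X (by simpa using (mem_sdiff.mp hi).2)).trans (hF i)
    rw [← prod_sdiff hs, sub_eq_iff_eq_add.mp hq, add_mul, one_mul, map_add, mul_assoc,
      coeff_X_pow_mul', if_neg (by omega), zero_add]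
  have hlim := ((WithPiTopology.continuous_coeff R n).tendsto G).comp hG
  exact tendsto_nhds_unique hlim (tendsto_const_nhds.congr'
    ((Filter.eventually_ge_atTop _).mono fun s hs => (hstable s hs).symm))

end PowerSeries

theorem one_sub_X_pow_mul_geom {k : ℕ} (hk : k ≠ 0) : (1 - X ^ k) * geom k = 1 :=
  mul_invOfUnit _ 1 (by simp [zero_pow hk])

theorem geom_eq_one_add_X_pow_mul {k : ℕ} (hk : k ≠ 0) : geom k = 1 + X ^ k * geom k := by
  linear_combination one_sub_X_pow_mul_geom hk

theorem X_pow_dvd_geom_sub_one (k : ℕ) : X ^ k ∣ geom k - 1 := by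
  rcases eq_or_ne k 0 with rfl | hk
  · simp
  · exact ⟨geom k, by linear_combination geom_eq_one_add_X_pow_mul hk⟩

theorem geom_eq_tsum_pow {k : ℕ} (hk : k ≠ 0) : geom k = ∑' j, (X ^ k : ℤ⟦X⟧) ^ j := by
  have hT := WithPiTopology.one_sub_mul_tsum_pow_of_constantCoeff_eq_zero
    (f := (X ^ k : ℤ⟦X⟧)) (by simp [zero_pow hk])
  linear_combination (∑' j, (X ^ k : ℤ⟦X⟧) ^ j) * one_sub_X_pow_mul_geom hk - geom k * hT

theorem one_add_tsum_ite_even_smul_X_pow {k : ℕ} (hk : k ≠ 0) :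
    1 + ∑' j, (if Even k then 2 else 1 : ℤ) • (X : ℤ⟦X⟧) ^ (k * (j + 1)) =
      geom k * if Even k then 1 + X ^ k else 1 := by
  have htsum : ∑' j, (if Even k then 2 else 1 : ℤ) • (X : ℤ⟦X⟧) ^ (k * (j + 1)) =
      (if Even k then 2 else 1 : ℤ) • (X ^ k * geom k) := by
    simp_rw [pow_mul, pow_succ']
    have hs := WithPiTopology.summable_pow_of_constantCoeff_eq_zero (f := (X ^ k : ℤ⟦X⟧))
      (by simp [zero_pow hk])
    rw [geom_eq_tsum_pow hk, ← hs.tsum_mul_left, (hs.mul_left _).tsum_const_smul]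
  rw [htsum]
  split_ifs
  all_goals linear_combination -geom_eq_one_add_X_pow_mul hk

theorem mk_U1_eq_genFun :
    PowerSeries.mk (fun n => (U1 n : ℤ)) =
      Nat.Partition.genFun fun i _ => if Even i then 2 else 1 := by
  ext n
  simp only [coeff_mk, Nat.Partition.coeff_genFun, U1, evenPartsCount, Nat.cast_sum, Nat.cast_pow,
    Nat.cast_ofNat]
  refine sum_congr rfl fun p _ => ?_
  simp only [Finsupp.prod, Multiset.toFinsupp_support]
  rw [prod_ite, prod_const, prod_const_one, mul_one]

theorem X_pow_dvd_geom_succ_sub_one (k : ℕ) : X ^ k ∣ geom (k + 1) - 1 :=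
  (pow_dvd_pow X k.le_succ).trans (X_pow_dvd_geom_sub_one _)

theorem X_pow_dvd_one_add_X_pow_sub_one (k : ℕ) :
    X ^ k ∣ (1 + X ^ (2 * (k + 1)) : ℤ⟦X⟧) - 1 := by
  simpa using pow_dvd_pow (X : ℤ⟦X⟧) (by omega : k ≤ 2 * (k + 1))

theorem multipliable_geom_succ : Multipliable fun k => geom (k + 1) :=
  PowerSeries.multipliable_of_X_pow_dvd_sub_one X_pow_dvd_geom_succ_sub_one

theorem multipliable_one_add_X_pow_two_mul_succ :
    Multipliable fun k => (1 + X ^ (2 * (k + 1)) : ℤ⟦X⟧) :=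
  PowerSeries.multipliable_of_X_pow_dvd_sub_one X_pow_dvd_one_add_X_pow_sub_one

theorem hasProd_geom_mul_ite_even :
    HasProd (fun i => geom (i + 1) * if Even (i + 1) then 1 + X ^ (i + 1) else 1)
      (PowerSeries.mk fun n => (U1 n : ℤ)) := by
  rw [mk_U1_eq_genFun]
  have h := Nat.Partition.hasProd_genFun fun i _ => if Even i then (2 : ℤ) else 1
  convert h using 1
  · rfl -- the two `CommMonoid ℤ⟦X⟧` instances agree only up to unfolding
  · exact funext fun i => (one_add_tsum_ite_even_smul_X_pow i.succ_ne_zero).symm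

theorem hasProd_ite_even_one_add_X_pow :
    HasProd (fun i => if Even (i + 1) then 1 + X ^ (i + 1) else (1 : ℤ⟦X⟧))
      (∏' k, (1 + X ^ (2 * (k + 1)))) := by
  have hinj : Function.Injective fun k : ℕ => 2 * k + 1 := fun a b h => by simpa using h
  refine (hinj.hasProd_iff fun i hi => if_neg ?_).mp ?_
  · rintro ⟨r, hr⟩
    exact hi ⟨r - 1, by simp only; omega⟩
  · convert multipliable_one_add_X_pow_two_mul_succ.hasProd using 2 with k
    simp [show 2 * k + 1 + 1 = 2 * (k + 1) by ring]

theorem mk_U1_eq_tprod :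
    PowerSeries.mk (fun n => (U1 n : ℤ)) = (∏' k, geom (k + 1)) * ∏' k, (1 + X ^ (2 * (k + 1))) :=
  hasProd_geom_mul_ite_even.unique
    (multipliable_geom_succ.hasProd.mul hasProd_ite_even_one_add_X_pow)

theorem hasProd_mk_U1 :
    HasProd (fun k => geom (k + 1) * (1 + X ^ (2 * (k + 1))))
      (PowerSeries.mk fun n => (U1 n : ℤ)) :=
  mk_U1_eq_tprod ▸
    multipliable_geom_succ.hasProd.mul multipliable_one_add_X_pow_two_mul_succ.hasProd

/-- `∑_{n≥0} U₁(n) t^n = (∏_{k≥1} 1/(1-t^k)) · ∏_{k≥1} (1+t^{2k})` as formal power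
series over `ℤ`, stated coefficientwise via stabilized truncations. -/
theorem U1_generating_function :
    ∀ n : ℕ,
      (U1 n : ℤ) =
        PowerSeries.coeff n ((∏ k ∈ Finset.range (n + 1), geom (k + 1)) *
          ∏ k ∈ Finset.range (n + 1), (1 + (PowerSeries.X : PowerSeries ℤ) ^ (2 * (k + 1)))) := by
  intro n
  rw [← prod_mul_distrib, ← hasProd_mk_U1.coeff_eq_coeff_prod_range (fun k =>
    dvd_mul_sub_one (X_pow_dvd_geom_succ_sub_one k) (X_pow_dvd_one_add_X_pow_sub_one k)), coeff_mk]
end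

section
/- As formal power series over ℤ, (∏_{k≥1} 1/(1-t^k)) · ∏_{k≥1}(1+t^{2k}) = (∏_{k≥1} 1/(1-t^k)) · (∏_{k≥1} 1/(1-t^{4k})) · ∑_{k≥0} t^{k(k+1)}. -/
/-!
Put `q = t²`. Since `∏ 1/(1 - t^{4k})` inverts `∏ (1 - q^{2k})`, the statement is Gauss's identity
`∏_{k ≥ 1} (1 + q^k)(1 - q^{2k}) = ∑_{k ≥ 0} q^{k(k+1)/2}` modulo `t^{n+1}`, the `z = 1` case of
the Jacobi triple product, which is proved here from its finite form.

The q-binomial theorem for `∏_{j < 2N} (q^N + q^{j+1})`, divided by `q^{(3N² + N)/2}`, gives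
`(-1;q)_N (-q;q)_N = ∑_{-N ≤ m ≤ N} [2N, N + m]_q q^{m(m+1)/2}`. After multiplication by
`(q;q)_{2N}`, each `[2N, N + m]_q (q;q)_{2N}` is `1` modulo `q^{N - |m| + 1}`, which the factor
`q^{m(m+1)/2}` lifts to `q^N`. The terms `m` and `-1 - m` carry the same power, so modulo `q^N`
the right side is `2 ∑_{k < N} q^{k(k+1)/2}` and the left side is `2 (-q;q)_N (q²;q²)_N`; the
factor `2` cancels in `ℤ⟦X⟧`.
-/

open PowerSeries Finset

section

variable {R : Type*} [CommRing R]

def gaussBinom (q : R) : ℕ → ℕ → R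
  | _, 0 => 1
  | 0, _ + 1 => 0
  | m + 1, k + 1 => gaussBinom q m k + q ^ (k + 1) * gaussBinom q m (k + 1)

@[simp] theorem gaussBinom_zero_right (q : R) (m : ℕ) : gaussBinom q m 0 = 1 := by
  cases m <;> rfl

@[simp] theorem gaussBinom_zero_succ (q : R) (k : ℕ) : gaussBinom q 0 (k + 1) = 0 := rfl

theorem gaussBinom_succ_succ (q : R) (m k : ℕ) :
    gaussBinom q (m + 1) (k + 1) = gaussBinom q m k + q ^ (k + 1) * gaussBinom q m (k + 1) := rfl

theorem gaussBinom_eq_zero_of_lt (q : R) {m k : ℕ} (h : m < k) : gaussBinom q m k = 0 := by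
  induction m generalizing k with
  | zero => obtain ⟨k, rfl⟩ := Nat.exists_eq_add_one.2 h; rfl
  | succ m ih =>
    obtain ⟨k, rfl⟩ := Nat.exists_eq_add_one.2 (Nat.zero_lt_of_lt h)
    rw [gaussBinom_succ_succ, ih (by omega), ih (by omega), mul_zero, add_zero]

theorem gaussBinom_mul_prod_one_sub_pow (q : R) (m k : ℕ) :
    gaussBinom q m k * ∏ j ∈ range k, (1 - q ^ (j + 1)) =
      ∏ j ∈ range k, (1 - q ^ (m - j)) := by
  induction m generalizing k with
  | zero => cases k <;> simp
  | succ m ih =>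
    cases k with
    | zero => simp
    | succ k =>
      have hsplit : ∏ j ∈ range (k + 1), (1 - q ^ (m + 1 - j)) =
          (1 - q ^ (m + 1)) * ∏ j ∈ range k, (1 - q ^ (m - j)) := by
        simp [prod_range_succ', mul_comm]
      rw [gaussBinom_succ_succ, add_mul, mul_assoc, ih, prod_range_succ, ← mul_assoc, ih,
        prod_range_succ, hsplit]
      by_cases hkm : k ≤ m
      · have : q ^ (k + 1) * q ^ (m - k) = q ^ (m + 1) := by rw [← pow_add]; congr 1; omega
        linear_combination (-∏ j ∈ range k, (1 - q ^ (m - j))) * this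
      · rw [prod_eq_zero (i := m) (mem_range.2 (by omega)) (by simp)]
        ring

theorem prod_one_sub_pow_smodEq_one (q : R) {ι : Type*} {s : Finset ι} {e : ι → ℕ} {r : ℕ}
    (h : ∀ i ∈ s, r ≤ e i) : ∏ i ∈ s, (1 - q ^ e i) ≡ 1 [SMOD Ideal.span {q ^ r}] := by
  have hfactor : ∀ i ∈ s, 1 - q ^ e i ≡ 1 [SMOD Ideal.span {q ^ r}] := fun i hi => by
    rw [SModEq.sub_mem, sub_sub_cancel_left, neg_mem_iff, Ideal.mem_span_singleton]
    exact pow_dvd_pow q (h i hi)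
  simpa using SModEq.prod hfactor

theorem gaussBinom_add_mul_prod_smodEq_one (q : R) {k l r : ℕ} (hk : r ≤ k + 1)
    (hl : r ≤ l + 1) :
    gaussBinom q (k + l) k * ∏ j ∈ range (k + l), (1 - q ^ (j + 1)) ≡ 1
      [SMOD Ideal.span {q ^ r}] := by
  rw [prod_range_add, ← mul_assoc, gaussBinom_mul_prod_one_sub_pow]
  have hleft : ∏ j ∈ range k, (1 - q ^ (k + l - j)) ≡ 1 [SMOD Ideal.span {q ^ r}] :=
    prod_one_sub_pow_smodEq_one q fun j hj => by rw [mem_range] at hj; omega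
  have hright : ∏ j ∈ range l, (1 - q ^ (k + j + 1)) ≡ 1 [SMOD Ideal.span {q ^ r}] :=
    prod_one_sub_pow_smodEq_one q fun j _ => by omega
  simpa using hleft.mul hright

-- The q-binomial theorem with `q = t²`, so that the exponent `k(k+1) = 2 C(k+1, 2)` needs no
-- halving.
theorem prod_add_mul_pow_two_mul_eq_sum_gaussBinom (t x y : R) (m : ℕ) :
    ∏ j ∈ range m, (x + y * t ^ (2 * (j + 1))) =
      ∑ k ∈ range (m + 1),
        gaussBinom (t ^ 2) m k * t ^ (k * (k + 1)) * y ^ k * x ^ (m - k) := by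
  induction m generalizing y with
  | zero => simp
  | succ m ih =>
    set g : ℕ → R := fun k => t ^ ((k + 1) * (k + 2)) * y ^ (k + 1) * x ^ (m - k)
    have hshift : ∏ j ∈ range m, (x + y * t ^ (2 * (j + 1 + 1))) =
        ∏ j ∈ range m, (x + y * t ^ 2 * t ^ (2 * (j + 1))) :=
      prod_congr rfl fun j _ => by ring
    have hy : ∑ k ∈ range (m + 1),
        gaussBinom (t ^ 2) m k * t ^ (k * (k + 1)) * (y * t ^ 2) ^ k * x ^ (m - k) * (y * t ^ 2) =
        ∑ k ∈ range (m + 1), gaussBinom (t ^ 2) m k * g k :=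
      sum_congr rfl fun k _ => by simp only [g]; ring
    have hx : ∑ k ∈ range (m + 1),
        gaussBinom (t ^ 2) m k * t ^ (k * (k + 1)) * (y * t ^ 2) ^ k * x ^ (m - k) * x =
        ∑ k ∈ range (m + 1), (t ^ 2) ^ (k + 1) * gaussBinom (t ^ 2) m (k + 1) * g k +
          x ^ (m + 1) := by
      rw [sum_range_succ (fun k => (t ^ 2) ^ (k + 1) * gaussBinom (t ^ 2) m (k + 1) * g k) m,
        gaussBinom_eq_zero_of_lt _ (lt_add_one m), sum_range_succ' _ m]
      simp only [mul_zero, zero_mul, add_zero]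
      refine congrArg₂ (· + ·) (sum_congr rfl fun k hk => ?_) (by simp [pow_succ])
      have hkm : m - k = m - (k + 1) + 1 := by rw [mem_range] at hk; omega
      simp only [g, hkm]
      ring
    have hpascal : ∑ k ∈ range (m + 1), gaussBinom (t ^ 2) (m + 1) (k + 1) *
        t ^ ((k + 1) * (k + 1 + 1)) * y ^ (k + 1) * x ^ (m + 1 - (k + 1)) =
        ∑ k ∈ range (m + 1), gaussBinom (t ^ 2) m k * g k +
          ∑ k ∈ range (m + 1), (t ^ 2) ^ (k + 1) * gaussBinom (t ^ 2) m (k + 1) * g k := by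
      rw [← sum_add_distrib]
      refine sum_congr rfl fun k _ => ?_
      simp only [g, gaussBinom_succ_succ, Nat.add_sub_add_right]
      ring
    rw [prod_range_succ', hshift, ih, sum_range_succ' _ (m + 1), hpascal, zero_add, mul_one,
      mul_add, sum_mul, sum_mul, hx, hy]
    simp only [gaussBinom_zero_right, mul_one, pow_zero, tsub_zero, one_mul]
    ring

theorem prod_pow_two_mul_add_one (t : R) (N : ℕ) :
    ∏ j ∈ range N, t ^ (2 * (j + 1)) = t ^ (N * (N + 1)) := by
  induction N with
  | zero => simp
  | succ N ih => rw [prod_range_succ, ih, ← pow_add]; ring_nf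

theorem prod_one_add_pow_two_mul_mul_prod_eq_sum_gaussBinom [IsDomain R] {t : R} (ht : t ≠ 0)
    (N : ℕ) :
    (∏ j ∈ range N, (1 + t ^ (2 * j))) * ∏ j ∈ range N, (1 + t ^ (2 * (j + 1))) =
      ∑ j ∈ range (N + 1), gaussBinom (t ^ 2) (2 * N) (N + j) * t ^ (j * (j + 1)) +
        ∑ j ∈ range N, gaussBinom (t ^ 2) (2 * N) (N - 1 - j) * t ^ (j * (j + 1)) := by
  have hlow : ∏ j ∈ range N, (t ^ (2 * N) + 1 * t ^ (2 * (j + 1))) =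
      t ^ (N * (N + 1)) * ∏ j ∈ range N, (1 + t ^ (2 * j)) := calc
    _ = ∏ j ∈ range N, (t ^ (2 * (j + 1)) * (1 + t ^ (2 * (N - 1 - j)))) := by
      refine prod_congr rfl fun j hj => ?_
      obtain ⟨d, rfl⟩ : ∃ d, N = j + d + 1 := ⟨N - j - 1, by rw [mem_range] at hj; omega⟩
      rw [show j + d + 1 - 1 - j = d by omega]
      ring
    _ = t ^ (N * (N + 1)) * ∏ j ∈ range N, (1 + t ^ (2 * j)) := by
      rw [prod_mul_distrib, prod_pow_two_mul_add_one,
        prod_range_reflect (fun j => 1 + t ^ (2 * j)) N]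
  have hhigh : ∏ j ∈ range N, (t ^ (2 * N) + 1 * t ^ (2 * (N + j + 1))) =
      t ^ (2 * N * N) * ∏ j ∈ range N, (1 + t ^ (2 * (j + 1))) := calc
    _ = ∏ j ∈ range N, (t ^ (2 * N) * (1 + t ^ (2 * (j + 1)))) :=
      prod_congr rfl fun j _ => by ring
    _ = _ := by rw [prod_mul_distrib, prod_const, card_range, ← pow_mul]
  have hprod := prod_range_add (fun j => t ^ (2 * N) + 1 * t ^ (2 * (j + 1))) N N
  rw [← two_mul, hlow, hhigh] at hprod
  have hsum := sum_range_add
    (fun k =>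
      gaussBinom (t ^ 2) (2 * N) k * t ^ (k * (k + 1)) * 1 ^ k * (t ^ (2 * N)) ^ (2 * N - k))
    N (N + 1)
  rw [show N + (N + 1) = 2 * N + 1 by omega, ← sum_range_reflect _ N] at hsum
  have hqb := prod_add_mul_pow_two_mul_eq_sum_gaussBinom t (t ^ (2 * N)) 1 (2 * N)
  rw [hprod, hsum] at hqb
  refine mul_left_cancel₀ (pow_ne_zero (3 * N ^ 2 + N) ht) ?_
  rw [mul_add, mul_sum, mul_sum, add_comm (∑ j ∈ range (N + 1), _)]
  refine Eq.trans (by ring) (hqb.trans (congrArg₂ (· + ·) (sum_congr rfl fun j hj => ?_)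
    (sum_congr rfl fun j hj => ?_)))
  · obtain ⟨d, rfl⟩ : ∃ d, N = j + d + 1 := ⟨N - j - 1, by rw [mem_range] at hj; omega⟩
    rw [show j + d + 1 - 1 - j = d by omega, show 2 * (j + d + 1) - d = 2 * j + d + 2 by omega]
    ring
  · obtain ⟨d, rfl⟩ : ∃ d, N = j + d := ⟨N - j, by rw [mem_range] at hj; omega⟩
    rw [show 2 * (j + d) - (j + d + j) = d by omega]
    ring

theorem smodEq_span_singleton_mul_left {a b d : R} (c : R)
    (h : a ≡ b [SMOD Ideal.span {d}]) : c * a ≡ c * b [SMOD Ideal.span {c * d}] := by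
  rw [SModEq.sub_mem, Ideal.mem_span_singleton] at h ⊢
  rw [← mul_sub]
  exact mul_dvd_mul_left c h

theorem prod_one_add_pow_two_mul_smodEq (t : R) (N : ℕ) :
    ∏ j ∈ range N, (1 + t ^ (2 * j)) ≡ 2 * ∏ j ∈ range N, (1 + t ^ (2 * (j + 1)))
      [SMOD Ideal.span {t ^ (2 * N)}] := by
  have hsucc : (∏ j ∈ range N, (1 + t ^ (2 * j))) * (1 + t ^ (2 * N)) =
      2 * ∏ j ∈ range N, (1 + t ^ (2 * (j + 1))) := by
    rw [← prod_range_succ (fun j => 1 + t ^ (2 * j)), prod_range_succ', mul_zero, pow_zero,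
      one_add_one_eq_two, mul_comm]
  have hone : 1 + t ^ (2 * N) ≡ 1 [SMOD Ideal.span {t ^ (2 * N)}] := by
    rw [SModEq.sub_mem, add_sub_cancel_left]
    exact Ideal.mem_span_singleton_self _
  simpa [hsucc] using ((SModEq.refl (∏ j ∈ range N, (1 + t ^ (2 * j)))).mul hone).symm

theorem prod_one_add_mul_prod_one_sub_smodEq (t : R) (N : ℕ) :
    (∏ j ∈ range N, (1 + t ^ (2 * (j + 1)))) *
        ∏ j ∈ range (2 * N), (1 - (t ^ 2) ^ (j + 1)) ≡
      ∏ j ∈ range N, (1 - t ^ (4 * (j + 1))) [SMOD Ideal.span {t ^ (2 * N)}] := by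
  have hlow : (∏ j ∈ range N, (1 + t ^ (2 * (j + 1)))) *
      ∏ j ∈ range N, (1 - (t ^ 2) ^ (j + 1)) =
      ∏ j ∈ range N, (1 - t ^ (4 * (j + 1))) := by
    rw [← prod_mul_distrib]
    exact prod_congr rfl fun j _ => by ring
  have hhigh :
      ∏ j ∈ range N, (1 - (t ^ 2) ^ (N + j + 1)) ≡ 1 [SMOD Ideal.span {t ^ (2 * N)}] := by
    have h := prod_one_sub_pow_smodEq_one (t ^ 2) (s := range N) (e := fun j => N + j + 1) (r := N)
      fun j _ => by omega
    rwa [← pow_mul] at h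
  have hsplit := prod_range_add (fun j => 1 - (t ^ 2) ^ (j + 1)) N N
  rw [← two_mul] at hsplit
  rw [hsplit, ← mul_assoc, hlow]
  simpa [add_assoc] using (SModEq.refl (∏ j ∈ range N, (1 - t ^ (4 * (j + 1))))).mul hhigh

theorem pow_mul_gaussBinom_mul_prod_smodEq (t : R) {N j k l : ℕ} (hkl : k + l = 2 * N)
    (hj : j ≤ N) (hk : N - j ≤ k + 1) (hl : N - j ≤ l + 1) :
    gaussBinom (t ^ 2) (2 * N) k * t ^ (j * (j + 1)) *
        ∏ i ∈ range (2 * N), (1 - (t ^ 2) ^ (i + 1)) ≡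
      t ^ (j * (j + 1)) [SMOD Ideal.span {t ^ (2 * N)}] := by
  have h := smodEq_span_singleton_mul_left (t ^ (j * (j + 1)))
    (gaussBinom_add_mul_prod_smodEq_one (t ^ 2) hk hl)
  rw [hkl, mul_one, ← pow_mul, ← pow_add] at h
  have hle : Ideal.span {t ^ (j * (j + 1) + 2 * (N - j))} ≤ Ideal.span {t ^ (2 * N)} := by
    refine Ideal.span_singleton_le_span_singleton.2 (pow_dvd_pow t ?_)
    obtain ⟨d, rfl⟩ := Nat.exists_eq_add_of_le hj
    rw [Nat.add_sub_cancel_left]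
    nlinarith [Nat.le_mul_self j]
  convert h.mono hle using 1
  ring

theorem sum_gaussBinom_mul_prod_smodEq (t : R) (N : ℕ) :
    (∑ j ∈ range (N + 1), gaussBinom (t ^ 2) (2 * N) (N + j) * t ^ (j * (j + 1)) +
      ∑ j ∈ range N, gaussBinom (t ^ 2) (2 * N) (N - 1 - j) * t ^ (j * (j + 1))) *
      ∏ i ∈ range (2 * N), (1 - (t ^ 2) ^ (i + 1))
      ≡ 2 * ∑ j ∈ range N, t ^ (j * (j + 1)) [SMOD Ideal.span {t ^ (2 * N)}] := by
  rw [add_mul, sum_mul, sum_mul, two_mul (∑ j ∈ range N, _)]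
  refine SModEq.add ?_ (SModEq.sum fun j hj => ?_)
  · have hlast : t ^ (N * (N + 1)) ≡ 0 [SMOD Ideal.span {t ^ (2 * N)}] := by
      refine SModEq.zero.2 (Ideal.mem_span_singleton.2 (pow_dvd_pow t ?_))
      nlinarith [Nat.le_mul_self N]
    calc _ ≡ ∑ j ∈ range (N + 1), t ^ (j * (j + 1)) [SMOD Ideal.span {t ^ (2 * N)}] :=
          SModEq.sum fun j hj => by
            rw [mem_range] at hj
            exact pow_mul_gaussBinom_mul_prod_smodEq t (l := N - j) (by omega) (by omega)
              (by omega) (by omega)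
      _ = ∑ j ∈ range N, t ^ (j * (j + 1)) + t ^ (N * (N + 1)) := sum_range_succ _ _
      _ ≡ ∑ j ∈ range N, t ^ (j * (j + 1)) + 0 [SMOD Ideal.span {t ^ (2 * N)}] :=
          SModEq.rfl.add hlast
      _ = _ := add_zero _
  · rw [mem_range] at hj
    exact pow_mul_gaussBinom_mul_prod_smodEq t (l := N + 1 + j) (by omega) (by omega) (by omega)
      (by omega)

theorem two_mul_prod_one_add_mul_prod_one_sub_smodEq [IsDomain R] {t : R} (ht : t ≠ 0) (N : ℕ) :
    2 * ((∏ j ∈ range N, (1 + t ^ (2 * (j + 1)))) *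
        ∏ j ∈ range N, (1 - t ^ (4 * (j + 1)))) ≡
      2 * ∑ j ∈ range N, t ^ (j * (j + 1)) [SMOD Ideal.span {t ^ (2 * N)}] := by
  set P := ∏ j ∈ range N, (1 + t ^ (2 * (j + 1)))
  set Q := ∏ j ∈ range (2 * N), (1 - (t ^ 2) ^ (j + 1))
  calc 2 * (P * _) ≡ 2 * P * (P * Q) [SMOD Ideal.span {t ^ (2 * N)}] := by
        rw [mul_assoc]
        exact SModEq.rfl.mul (SModEq.rfl.mul (prod_one_add_mul_prod_one_sub_smodEq t N).symm)
    _ ≡ (∏ j ∈ range N, (1 + t ^ (2 * j))) * P * Q [SMOD Ideal.span {t ^ (2 * N)}] := by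
        rw [← mul_assoc]
        exact ((prod_one_add_pow_two_mul_smodEq t N).symm.mul SModEq.rfl).mul SModEq.rfl
    _ = _ := by rw [prod_one_add_pow_two_mul_mul_prod_eq_sum_gaussBinom ht N]
    _ ≡ _ [SMOD Ideal.span {t ^ (2 * N)}] := sum_gaussBinom_mul_prod_smodEq t N

end

theorem smodEq_X_pow_of_two_mul {f g : ℤ⟦X⟧} {a : ℕ}
    (h : 2 * f ≡ 2 * g [SMOD Ideal.span {X ^ a}]) : f ≡ g [SMOD Ideal.span {X ^ a}] := by
  rw [SModEq.sub_mem, Ideal.mem_span_singleton, ← mul_sub] at h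
  rw [SModEq.sub_mem, Ideal.mem_span_singleton]
  refine X_prime.pow_dvd_of_dvd_mul_left a ?_ h
  rw [X_dvd_iff, map_ofNat]
  exact two_ne_zero

theorem PowerSeries.coeff_eq_of_smodEq {R : Type*} [CommRing R] {f g : R⟦X⟧} {n : ℕ}
    (h : f ≡ g [SMOD Ideal.span {X ^ (n + 1)}]) : coeff n f = coeff n g := by
  rw [SModEq.sub_mem, Ideal.mem_span_singleton, X_pow_dvd_iff] at h
  simpa [sub_eq_zero] using h n (lt_add_one n)

theorem geom_mul_one_sub_X_pow {k : ℕ} (hk : k ≠ 0) : geom k * (1 - X ^ k) = 1 := by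
  rw [geom, mul_comm]
  exact mul_invOfUnit _ _ (by simp [hk])

/-- As formal power series over `ℤ`,
`(∏_{k≥1} 1/(1-t^k)) · ∏_{k≥1}(1+t^{2k})
  = (∏_{k≥1} 1/(1-t^k)) · (∏_{k≥1} 1/(1-t^{4k})) · ∑_{k≥0} t^{k(k+1)}`,
stated coefficientwise via stabilized truncations. -/
theorem prod_geom_mul_prod_one_add_eq :
    ∀ n : ℕ,
      PowerSeries.coeff n ((∏ k ∈ Finset.range (n + 1), geom (k + 1)) *
        ∏ k ∈ Finset.range (n + 1), (1 + (PowerSeries.X : PowerSeries ℤ) ^ (2 * (k + 1)))) =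
      PowerSeries.coeff n ((∏ k ∈ Finset.range (n + 1), geom (k + 1)) *
        (∏ k ∈ Finset.range (n + 1), geom (4 * (k + 1))) *
        ∑ k ∈ Finset.range (n + 1), (PowerSeries.X : PowerSeries ℤ) ^ (k * (k + 1))) := by
  intro n
  set G := ∏ k ∈ range (n + 1), geom (k + 1)
  set G4 := ∏ k ∈ range (n + 1), geom (4 * (k + 1))
  set D := ∏ k ∈ range (n + 1), (1 - (X : ℤ⟦X⟧) ^ (4 * (k + 1)))
  have hG4D : G4 * D = 1 := by
    rw [← prod_mul_distrib]
    exact prod_eq_one fun k _ => geom_mul_one_sub_X_pow (by omega)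
  have hgauss := (smodEq_X_pow_of_two_mul
    (two_mul_prod_one_add_mul_prod_one_sub_smodEq X_ne_zero (n + 1))).mono
    (Ideal.span_singleton_le_span_singleton.2 (pow_dvd_pow X (by omega : n + 1 ≤ 2 * (n + 1))))
  apply coeff_eq_of_smodEq
  calc G * ∏ k ∈ range (n + 1), (1 + X ^ (2 * (k + 1)))
      = G * G4 * ((∏ k ∈ range (n + 1), (1 + X ^ (2 * (k + 1)))) * D) := by
        linear_combination (-G * ∏ k ∈ range (n + 1), (1 + X ^ (2 * (k + 1)))) * hG4D
    _ ≡ _ [SMOD _] := SModEq.rfl.mul hgauss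
end
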